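/- arXiv:2305.14474 — 3 statements merged into one kernel-verified Lean document; each statement's English description precedes it below -/
import Mathlib

section
/- For α ∈ (0,1) consider the energy I_α(μ) = ∬ (-log|x-y| + α(x₁-y₁)²/|x-y|²) dμ(y)dμ(x) + ∫ |x|² dμ(x) on probability measures on ℝ². The normalized characteristic function of the ellipse E_α = {x ∈ ℝ² : x₁²/(1-α) + x₂²/(1+α) ≤ 1}, namely μ_α = χ_{E_α}/|E_α|, has semi-axes a₁ = √(1-α), a₂ = √(1+α) satisfying a₁² + a₂² = 2 and these semi-axes solve the system (1/π)∫_{S¹} Ψ̂_α(y) y_j y_k / (a₁² y₁² + a₂² y₂²) dH¹(y) = δ_{jk} for j,k = 1,2, where Ψ̂_α(y) = (1-α) y₁² + (1+α) y₂² for y ∈ S¹. -/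
/-!
On the unit circle `Ψ̂_α` coincides with the denominator `a₁² y₁² + a₂² y₂²`, so the system reduces
to `∫_{S¹} y_j y_k dH¹ = π δ_{jk}`. Identifying `ℝ²` isometrically with `ℂ`, the quarter turn
`z ↦ I z` preserves `H¹` on the circle and exchanges `y₁² ↔ y₂²`, `y₁ y₂ ↔ -y₁ y₂`; together with
`y₁² + y₂² = 1` this leaves only `H¹(S¹) = 2π`. The upper bound comes from the 1-Lipschitz
parametrization `t ↦ exp (t I)` of the circle, the lower bound from cutting it into `n` arcs of
angle `2π/n`, each projecting onto a chord of length `2 sin (π/n)`, and letting `n → ∞`.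
-/

open Real MeasureTheory
open Complex (I arg)
open Function Metric Set Filter
open scoped ENNReal Topology

theorem lipschitzWith_exp_ofReal_mul_I : LipschitzWith 1 fun t : ℝ => Complex.exp (t * I) := by
  refine LipschitzWith.of_dist_le_mul fun s t => ?_
  have hfactor : Complex.exp (s * I) - Complex.exp (t * I) =
      Complex.exp (t * I) * (Complex.exp (I * ↑(s - t)) - 1) := by
    rw [mul_sub, ← Complex.exp_add]; push_cast; ring_nf
  rw [dist_eq_norm, hfactor, norm_mul, Complex.norm_exp_ofReal_mul_I, one_mul, NNReal.coe_one,
    one_mul, Real.dist_eq]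
  exact norm_exp_I_mul_ofReal_sub_one_le

theorem sphere_subset_image_exp_ofReal_mul_I :
    sphere (0 : ℂ) 1 ⊆ (fun t : ℝ => Complex.exp (t * I)) '' Ioc (-π) π := fun z hz =>
  ⟨arg z, Complex.arg_mem_Ioc z, by
    simpa [mem_sphere_zero_iff_norm.mp hz] using Complex.norm_mul_exp_arg_mul_I z⟩

theorem hausdorffMeasure_sphere_complex_le : μH[1] (sphere (0 : ℂ) 1) ≤ ENNReal.ofReal (2 * π) :=
  calc μH[1] (sphere (0 : ℂ) 1)
      ≤ μH[1] ((fun t : ℝ => Complex.exp (t * I)) '' Ioc (-π) π) :=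
        measure_mono sphere_subset_image_exp_ofReal_mul_I
    _ ≤ μH[1] (Ioc (-π) π) := by
        simpa using
          lipschitzWith_exp_ofReal_mul_I.hausdorffMeasure_image_le zero_le_one (Ioc (-π) π)
    _ = ENNReal.ofReal (2 * π) := by rw [hausdorffMeasure_real, Real.volume_Ioc]; ring_nf

theorem lipschitzWith_im_mul {u : ℂ} (hu : ‖u‖ = 1) : LipschitzWith 1 fun z : ℂ => (u * z).im :=
  LipschitzWith.of_dist_le_mul fun z w => by
    rw [NNReal.coe_one, one_mul, Real.dist_eq, ← Complex.sub_im, ← mul_sub, dist_eq_norm]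
    exact (Complex.abs_im_le_norm _).trans (by rw [norm_mul, hu, one_mul])

theorem arg_exp_ofReal_mul_I {t : ℝ} (ht : t ∈ Ioc (-π) π) : arg (Complex.exp (t * I)) = t := by
  rw [Complex.arg_exp_mul_I, toIocMod_eq_self]
  simpa [show -π + 2 * π = π by ring] using ht

theorem ofReal_two_mul_sin_le_hausdorffMeasure_arc {a b : ℝ} (ha : -π ≤ a) (hab : a ≤ b)
    (hb : b ≤ π) :
    ENNReal.ofReal (2 * Real.sin ((b - a) / 2)) ≤ μH[1] (sphere (0 : ℂ) 1 ∩ arg ⁻¹' Ioc a b) := by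
  set c := (a + b) / 2
  -- projection onto the tangent line at the midpoint of the arc
  set g : ℂ → ℝ := fun z => (Complex.exp (-c * I) * z).im
  have hg_exp (t : ℝ) : g (Complex.exp (t * I)) = Real.sin (t - c) := by
    simp only [g, ← Complex.exp_add]
    rw [show -c * I + t * I = ((t - c : ℝ) : ℂ) * I by push_cast; ring, Complex.exp_ofReal_mul_I_im]
  have hcover : Ioc (-Real.sin ((b - a) / 2)) (Real.sin ((b - a) / 2)) ⊆
      g '' (sphere (0 : ℂ) 1 ∩ arg ⁻¹' Ioc a b) := by
    have hsin :
        Ioc (Real.sin (a - c)) (Real.sin (b - c)) ⊆ (fun t => Real.sin (t - c)) '' Ioc a b :=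
      intermediate_value_Ioc hab (Real.continuous_sin.comp (continuous_sub_right c)).continuousOn
    rw [show a - c = -((b - a) / 2) by ring, show b - c = (b - a) / 2 by ring, Real.sin_neg] at hsin
    rintro v hv
    obtain ⟨t, ht, rfl⟩ := hsin hv
    refine ⟨Complex.exp (t * I), ⟨by simp, ?_⟩, hg_exp t⟩
    rwa [mem_preimage, arg_exp_ofReal_mul_I ⟨by linarith [ht.1], by linarith [ht.2]⟩]
  calc ENNReal.ofReal (2 * Real.sin ((b - a) / 2))
      = μH[1] (Ioc (-Real.sin ((b - a) / 2)) (Real.sin ((b - a) / 2))) := by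
        rw [hausdorffMeasure_real, Real.volume_Ioc]; ring_nf
    _ ≤ μH[1] (g '' (sphere (0 : ℂ) 1 ∩ arg ⁻¹' Ioc a b)) := measure_mono hcover
    _ ≤ μH[1] (sphere (0 : ℂ) 1 ∩ arg ⁻¹' Ioc a b) := by
        have hg : LipschitzWith 1 g := lipschitzWith_im_mul (by
          simpa using Complex.norm_exp_ofReal_mul_I (-c))
        simpa only [ENNReal.coe_one, ENNReal.one_rpow, one_mul] using
          hg.hausdorffMeasure_image_le zero_le_one (sphere (0 : ℂ) 1 ∩ arg ⁻¹' Ioc a b)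

theorem ofReal_two_mul_natCast_mul_sin_le_hausdorffMeasure_sphere (n : ℕ) :
    ENNReal.ofReal (2 * (n * Real.sin (π / n))) ≤ μH[1] (sphere (0 : ℂ) 1) := by
  set f : ℕ → ℝ := fun m => -π + m * (2 * π / n)
  have hf : Monotone f := fun i j hij => by
    simp only [f]; gcongr
  set A : ℕ → Set ℂ := fun m => sphere 0 1 ∩ arg ⁻¹' Ioc (f m) (f (m + 1))
  have hA_disj : Pairwise (Disjoint on A) := fun i j hij =>
    ((hf.pairwise_disjoint_on_Ioc_succ hij).preimage arg).mono inter_subset_right inter_subset_right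
  have hA_meas (m : ℕ) : MeasurableSet (A m) :=
    isClosed_sphere.measurableSet.inter (Complex.measurable_arg measurableSet_Ioc)
  have hA (m : ℕ) (hm : m ∈ Finset.range n) :
      ENNReal.ofReal (2 * Real.sin (π / n)) ≤ μH[1] (A m) := by
    have hmn : (m : ℝ) + 1 ≤ n := by exact_mod_cast Finset.mem_range.mp hm
    have hn : (0 : ℝ) < n := by linarith [(m.cast_nonneg : (0 : ℝ) ≤ m)]
    convert ofReal_two_mul_sin_le_hausdorffMeasure_arc (a := f m) (b := f (m + 1)) ?_ ?_ ?_ using 4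
    · simp only [f]; push_cast; field_simp; ring
    · simp only [f]; linarith [show 0 ≤ m * (2 * π / n) by positivity]
    · exact hf m.le_succ
    · have : ((m : ℝ) + 1) * (2 * π / n) ≤ 2 * π := by
        rw [mul_div_assoc', div_le_iff₀ hn]; nlinarith [pi_pos]
      simp only [f]; push_cast; linarith
  calc ENNReal.ofReal (2 * (n * Real.sin (π / n)))
      = ∑ m ∈ Finset.range n, ENNReal.ofReal (2 * Real.sin (π / n)) := by
        rw [Finset.sum_const, Finset.card_range, nsmul_eq_mul, ← ENNReal.ofReal_natCast,
          ← ENNReal.ofReal_mul n.cast_nonneg]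
        ring_nf
    _ ≤ ∑ m ∈ Finset.range n, μH[1] (A m) := Finset.sum_le_sum hA
    _ = μH[1] (⋃ m ∈ Finset.range n, A m) :=
        (measure_biUnion_finset (hA_disj.set_pairwise _) fun m _ => hA_meas m).symm
    _ ≤ μH[1] (sphere (0 : ℂ) 1) := measure_mono (iUnion₂_subset fun m _ => inter_subset_left)

theorem tendsto_natCast_mul_sin_pi_div :
    Tendsto (fun n : ℕ => n * Real.sin (π / n)) atTop (𝓝 π) := by
  have h : Tendsto (fun n : ℕ => π * Real.sinc (π / n)) atTop (𝓝 π) := by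
    simpa [Real.sinc_zero] using
      ((Real.continuous_sinc.tendsto 0).comp (tendsto_const_div_atTop_nhds_zero_nat π)).const_mul π
  refine h.congr' ?_
  filter_upwards [eventually_ne_atTop 0] with n hn
  rw [Real.sinc_of_ne_zero (by positivity)]
  field_simp

theorem hausdorffMeasure_sphere_complex : μH[1] (sphere (0 : ℂ) 1) = ENNReal.ofReal (2 * π) :=
  le_antisymm hausdorffMeasure_sphere_complex_le <|
    le_of_tendsto' ((ENNReal.continuous_ofReal.tendsto _).comp
        (tendsto_natCast_mul_sin_pi_div.const_mul 2))
      ofReal_two_mul_natCast_mul_sin_le_hausdorffMeasure_sphere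

theorem setIntegral_sphere_comp_isometryEquiv {X Y E : Type*} [MetricSpace X] [MeasurableSpace X]
    [BorelSpace X] [MetricSpace Y] [MeasurableSpace Y] [BorelSpace Y] [NormedAddCommGroup E]
    [NormedSpace ℝ E] (e : X ≃ᵢ Y) (d : ℝ) (x : X) (r : ℝ) (f : Y → E) :
    ∫ y in sphere x r, f (e y) ∂μH[d] = ∫ z in sphere (e x) r, f z ∂μH[d] := by
  simpa using (e.measurePreserving_hausdorffMeasure d).setIntegral_preimage_emb
    e.toHomeomorph.measurableEmbedding f (sphere (e x) r)

theorem Continuous.integrableOn_sphere_complex {f : ℂ → ℝ} (hf : Continuous f) :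
    IntegrableOn f (sphere 0 1) μH[1] :=
  hf.continuousOn.integrableOn_of_subset_isCompact (isCompact_sphere 0 1)
    isClosed_sphere.measurableSet subset_rfl
    (by rw [hausdorffMeasure_sphere_complex]; exact ENNReal.ofReal_ne_top)

theorem setIntegral_sphere_comp_mul_I (f : ℂ → ℝ) :
    ∫ z in sphere (0 : ℂ) 1, f (I * z) ∂μH[1] = ∫ z in sphere (0 : ℂ) 1, f z ∂μH[1] := by
  simpa [Circle.coe_exp, Complex.exp_pi_div_two_mul_I] using
    setIntegral_sphere_comp_isometryEquiv (rotation (Circle.exp (π / 2))).toIsometryEquiv 1 0 1 f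

theorem setIntegral_sphere_re_mul_im :
    ∫ z in sphere (0 : ℂ) 1, z.re * z.im ∂μH[1] = 0 := by
  have h := setIntegral_sphere_comp_mul_I fun z => z.re * z.im
  simp only [Complex.mul_re, Complex.mul_im, Complex.I_re, Complex.I_im, zero_mul, one_mul,
    zero_sub, zero_add, neg_mul, integral_neg] at h
  rw [show (fun z : ℂ => z.im * z.re) = fun z => z.re * z.im by ext; ring] at h
  linarith

theorem setIntegral_sphere_re_mul_re_eq_im_mul_im :
    ∫ z in sphere (0 : ℂ) 1, z.re * z.re ∂μH[1] = ∫ z in sphere (0 : ℂ) 1, z.im * z.im ∂μH[1] := by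
  simpa using (setIntegral_sphere_comp_mul_I fun z => z.re * z.re).symm

theorem setIntegral_sphere_re_mul_re_add_im_mul_im :
    ∫ z in sphere (0 : ℂ) 1, (z.re * z.re + z.im * z.im) ∂μH[1] = 2 * π := by
  rw [setIntegral_congr_fun isClosed_sphere.measurableSet (g := fun _ => (1 : ℝ)) fun z hz => by
    rw [← Complex.normSq_apply, Complex.normSq_eq_norm_sq, mem_sphere_zero_iff_norm.mp hz, one_pow]]
  simp [measureReal_def, hausdorffMeasure_sphere_complex, pi_pos.le]

theorem setIntegral_sphere_re_mul_re : ∫ z in sphere (0 : ℂ) 1, z.re * z.re ∂μH[1] = π := by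
  have h := setIntegral_sphere_re_mul_re_add_im_mul_im
  rw [integral_add (by fun_prop : Continuous fun z : ℂ => z.re * z.re).integrableOn_sphere_complex
    (by fun_prop : Continuous fun z : ℂ => z.im * z.im).integrableOn_sphere_complex,
    ← setIntegral_sphere_re_mul_re_eq_im_mul_im] at h
  linarith

theorem setIntegral_sphere_im_mul_im : ∫ z in sphere (0 : ℂ) 1, z.im * z.im ∂μH[1] = π := by
  rw [← setIntegral_sphere_re_mul_re_eq_im_mul_im, setIntegral_sphere_re_mul_re]

theorem setIntegral_sphere_euclideanSpace_mul_apply (j k : Fin 2) :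
    ∫ y in sphere (0 : EuclideanSpace ℝ (Fin 2)) 1, y j * y k ∂μH[1] = if j = k then π else 0 := by
  have h := setIntegral_sphere_comp_isometryEquiv
    Complex.orthonormalBasisOneI.repr.symm.toIsometryEquiv 1 0 1
    fun z => Complex.orthonormalBasisOneI.repr z j * Complex.orthonormalBasisOneI.repr z k
  simp only [LinearIsometryEquiv.coe_toIsometryEquiv, LinearIsometryEquiv.apply_symm_apply,
    map_zero] at h
  rw [h]
  fin_cases j <;> fin_cases k <;>
    simp [setIntegral_sphere_re_mul_re, setIntegral_sphere_im_mul_im, setIntegral_sphere_re_mul_im,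
      mul_comm (Complex.im _)]

/-- For `α ∈ (0,1)`, the semi-axes `a₁ = √(1-α)`, `a₂ = √(1+α)` of the ellipse `E_α`
satisfy `a₁² + a₂² = 2` and solve the Euler–Lagrange system
`(1/π) ∫_{S¹} Ψ̂_α(y) y_j y_k / (a₁² y₁² + a₂² y₂²) dH¹(y) = δ_{jk}`, where
`Ψ̂_α(y) = (1-α) y₁² + (1+α) y₂²`. -/
theorem ellipse_law_semiaxes_solve_system (α : ℝ) (hα : α ∈ Set.Ioo (0 : ℝ) 1)
    (a₁ a₂ : ℝ) (ha₁ : a₁ = Real.sqrt (1 - α)) (ha₂ : a₂ = Real.sqrt (1 + α)) :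
    a₁ ^ 2 + a₂ ^ 2 = 2 ∧
    ∀ j k : Fin 2,
      (1 / π) * ∫ y in Metric.sphere (0 : EuclideanSpace ℝ (Fin 2)) 1,
          ((1 - α) * (y 0) ^ 2 + (1 + α) * (y 1) ^ 2) * (y j) * (y k) /
            (a₁ ^ 2 * (y 0) ^ 2 + a₂ ^ 2 * (y 1) ^ 2) ∂(μH[1]) =
        if j = k then 1 else 0 := by
  obtain ⟨hα₀, hα₁⟩ := hα
  have ha₁_sq : a₁ ^ 2 = 1 - α := by rw [ha₁, Real.sq_sqrt (by linarith)]
  have ha₂_sq : a₂ ^ 2 = 1 + α := by rw [ha₂, Real.sq_sqrt (by linarith)]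
  refine ⟨by rw [ha₁_sq, ha₂_sq]; ring, fun j k => ?_⟩
  have hcancel : EqOn (fun y : EuclideanSpace ℝ (Fin 2) =>
      ((1 - α) * (y 0) ^ 2 + (1 + α) * (y 1) ^ 2) * (y j) * (y k) /
        (a₁ ^ 2 * (y 0) ^ 2 + a₂ ^ 2 * (y 1) ^ 2)) (fun y => y j * y k) (sphere 0 1) := by
    intro y hy
    have hy_sq : y 0 ^ 2 + y 1 ^ 2 = 1 := by
      have := EuclideanSpace.real_norm_sq_eq y
      rw [mem_sphere_zero_iff_norm.mp hy, Fin.sum_univ_two] at this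
      linarith
    have hΨ : 0 < (1 - α) * y 0 ^ 2 + (1 + α) * y 1 ^ 2 := by nlinarith
    rw [ha₁_sq, ha₂_sq]
    field_simp
  rw [setIntegral_congr_fun isClosed_sphere.measurableSet hcancel,
    setIntegral_sphere_euclideanSpace_mul_apply]
  split_ifs <;> simp [pi_ne_zero]
end

section
/- Let Ψ̂: S¹ → ℝ be continuous with Ψ̂ ≥ C₀ > 0 and (1/(2π)) ∫_{S¹} Ψ̂ dH¹ = 1. Define γ(β, Q) = −(1/π) ∫_{S¹} Ψ̂(Qy) log(β y₁² + (2−β) y₂²) dH¹(y) for β ∈ [0,2] and Q ∈ SO(2). Then γ is continuous on the compact set [0,2] × SO(2), attains its minimum at some (β₀, Q₀), and β₀ ∈ (0,2). -/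
/-!
The integrand is dominated by `sup Ψ · (log 2 + |log y₀²| + |log y₁²|)`, and `log y_j²` is
integrable on the circle by the layer-cake formula, since the arcs where `|y_j| ≤ ε` have total
length at most `2πε`. Dominated convergence then gives continuity, and `2π`-periodicity in `θ`
reduces the minimisation to a compact rectangle.

The endpoint `β = 0` is beaten by a small `b = 2eε²`: on the arc `0 < y₁ ≤ ε`, which has length
at least `ε`, the logarithm rises by at least `1` when `β` moves from `0` to `b`, a gain of
`C₀ ε`; everywhere else it drops by at most `b`, a loss of `O(ε²)`. The endpoint `β = 2` is the
same argument with the coordinates exchanged.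
-/

open Real MeasureTheory

abbrev Plane := EuclideanSpace ℝ (Fin 2)

/-- Rotation of the plane by angle `θ` (parametrising `SO(2)`). -/
noncomputable def rot (θ : ℝ) (y : Plane) : Plane :=
  (EuclideanSpace.equiv (Fin 2) ℝ).symm
    ![Real.cos θ * y 0 - Real.sin θ * y 1, Real.sin θ * y 0 + Real.cos θ * y 1]

open Set Filter Topology

local notation "𝕊" => Metric.sphere (0 : Plane) 1

namespace ReducedEnergy

lemma mem_sphere_iff {y : Plane} : y ∈ 𝕊 ↔ y 0 ^ 2 + y 1 ^ 2 = 1 := by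
  simp [EuclideanSpace.sphere_zero_eq 1 zero_le_one, Fin.sum_univ_two]

lemma sq_coord_le_one {y : Plane} (hy : y ∈ 𝕊) (j : Fin 2) : y j ^ 2 ≤ 1 := by
  rw [mem_sphere_iff] at hy
  fin_cases j <;> simp only [Fin.zero_eta, Fin.mk_one] <;>
    nlinarith [sq_nonneg (y 0), sq_nonneg (y 1)]

@[simp] lemma rot_apply_zero (θ : ℝ) (y : Plane) : rot θ y 0 = cos θ * y 0 - sin θ * y 1 := rfl

@[simp] lemma rot_apply_one (θ : ℝ) (y : Plane) : rot θ y 1 = sin θ * y 0 + cos θ * y 1 := rfl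

lemma rot_mem_sphere (θ : ℝ) {y : Plane} (hy : y ∈ 𝕊) : rot θ y ∈ 𝕊 := by
  rw [mem_sphere_iff] at hy ⊢
  simp only [rot_apply_zero, rot_apply_one]
  nlinarith [sin_sq_add_cos_sq θ]

lemma rot_add_two_pi (θ : ℝ) : rot (θ + 2 * π) = rot θ := by
  funext y
  simp only [rot, cos_add_two_pi, sin_add_two_pi]

lemma continuous_rot : Continuous fun p : ℝ × Plane => rot p.1 p.2 := by
  unfold rot
  fun_prop

noncomputable def circlePoint (t : ℝ) : Plane := !₂[cos t, sin t]

lemma lipschitzWith_circlePoint : LipschitzWith 1 circlePoint := by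
  have h : circlePoint = Complex.orthonormalBasisOneI.repr ∘ circleMap 0 1 := by
    ext t j; fin_cases j <;> simp [circlePoint, circleMap, Complex.orthonormalBasisOneI_repr_apply]
  simpa [h] using Complex.orthonormalBasisOneI.repr.lipschitz.comp (lipschitzWith_circleMap 0 1)

lemma lipschitzWith_coord (j : Fin 2) : LipschitzWith 1 fun y : Plane => y j := by
  have h := (LipschitzWith.eval (α := fun _ : Fin 2 => ℝ) j).comp
    (PiLp.lipschitzWith_ofLp 2 fun _ : Fin 2 => ℝ)
  rw [mul_one] at h
  exact h

lemma hausdorffMeasure_strip_one_le {ε : ℝ} (hε : 0 ≤ ε) (hε1 : ε ≤ 1) :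
    μH[1] ({y : Plane | |y 1| ≤ ε} ∩ 𝕊) ≤ ENNReal.ofReal (2 * π * ε) := by
  set a := arcsin ε
  have ha : 0 ≤ a := arcsin_nonneg.2 hε
  have hsub : {y : Plane | |y 1| ≤ ε} ∩ 𝕊 ⊆
      circlePoint '' Icc (-a) a ∪ circlePoint '' Icc (π - a) (π + a) := by
    rintro y ⟨hy1 : |y 1| ≤ ε, hy⟩
    obtain ⟨hy1l, hy1u⟩ := abs_le.1 (hy1.trans hε1)
    set t := arcsin (y 1)
    have ht : t ∈ Icc (-a) a := by
      constructor
      · rw [← arcsin_neg]; exact monotone_arcsin (neg_le_of_abs_le hy1)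
      · exact monotone_arcsin (le_of_abs_le hy1)
    have hsin : sin t = y 1 := sin_arcsin hy1l hy1u
    have hcos : cos t = |y 0| := by
      rw [cos_arcsin, ← sqrt_sq_eq_abs, ← mem_sphere_iff.1 hy, add_sub_cancel_right]
    rcases le_or_gt 0 (y 0) with h0 | h0
    · refine Or.inl ⟨t, ht, ?_⟩
      ext j; fin_cases j <;> simp [circlePoint, hsin, hcos, abs_of_nonneg h0]
    · refine Or.inr ⟨π - t, ⟨by linarith [ht.2], by linarith [ht.1]⟩, ?_⟩
      ext j; fin_cases j <;> simp [circlePoint, hsin, hcos, abs_of_neg h0]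
  have hlip (I : Set ℝ) : μH[1] (circlePoint '' I) ≤ volume I := by
    simpa [← hausdorffMeasure_real] using
      lipschitzWith_circlePoint.hausdorffMeasure_image_le zero_le_one I
  have harc : 2 / π * a ≤ ε := by
    simpa [a, sin_arcsin (by linarith) hε1] using mul_le_sin ha (arcsin_le_pi_div_two ε)
  calc _ ≤ μH[1] (circlePoint '' Icc (-a) a) + μH[1] (circlePoint '' Icc (π - a) (π + a)) :=
        (measure_mono hsub).trans (measure_union_le _ _)
    _ ≤ volume (Icc (-a) a) + volume (Icc (π - a) (π + a)) := add_le_add (hlip _) (hlip _)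
    _ = ENNReal.ofReal (4 * a) := by
        rw [volume_Icc, volume_Icc, ← ENNReal.ofReal_add (by linarith) (by linarith)]
        ring_nf
    _ ≤ ENNReal.ofReal (2 * π * ε) := by
        refine ENNReal.ofReal_le_ofReal ?_
        rw [div_mul_eq_mul_div, div_le_iff₀ pi_pos] at harc
        linarith

lemma hausdorffMeasure_strip_le (j : Fin 2) {ε : ℝ} (hε : 0 ≤ ε) (hε1 : ε ≤ 1) :
    μH[1] ({y : Plane | |y j| ≤ ε} ∩ 𝕊) ≤ ENNReal.ofReal (2 * π * ε) := by
  fin_cases j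
  · let σ := (LinearIsometryEquiv.piLpCongrLeft 2 ℝ ℝ (Equiv.swap (0 : Fin 2) 1)).toIsometryEquiv
    have hσ : {y : Plane | |y 0| ≤ ε} ∩ 𝕊 = σ ⁻¹' ({y | |y 1| ≤ ε} ∩ 𝕊) := by
      ext y; simp [σ]
    change μH[1] ({y : Plane | |y 0| ≤ ε} ∩ 𝕊) ≤ _
    rw [hσ, σ.hausdorffMeasure_preimage]
    exact hausdorffMeasure_strip_one_le hε hε1
  · exact hausdorffMeasure_strip_one_le hε hε1

lemma hausdorffMeasure_sphere_le : μH[1] 𝕊 ≤ ENNReal.ofReal (2 * π) := by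
  have h : {y : Plane | |y 1| ≤ 1} ∩ 𝕊 = 𝕊 :=
    inter_eq_right.2 fun y hy => (sq_le_one_iff_abs_le_one _).1 (sq_coord_le_one hy 1)
  simpa [h] using hausdorffMeasure_strip_le 1 zero_le_one le_rfl

instance : IsFiniteMeasure ((μH[1] : Measure Plane).restrict 𝕊) :=
  isFiniteMeasure_restrict.2 (ne_top_of_le_ne_top ENNReal.ofReal_ne_top hausdorffMeasure_sphere_le)

lemma hausdorffMeasure_axis_inter_sphere (j : Fin 2) :
    μH[1] ({y : Plane | y j = 0} ∩ 𝕊) = 0 := by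
  have hlim : Tendsto (fun ε : ℝ => ENNReal.ofReal (2 * π * ε)) (𝓝[>] 0) (𝓝 0) := by
    rw [← ENNReal.ofReal_zero]
    refine ENNReal.tendsto_ofReal (tendsto_nhdsWithin_of_tendsto_nhds ?_)
    simpa using (continuous_const.mul continuous_id).tendsto (0 : ℝ) (f := fun ε : ℝ => 2 * π * ε)
  refine nonpos_iff_eq_zero.1 (ge_of_tendsto hlim ?_)
  filter_upwards [Ioc_mem_nhdsGT one_pos] with ε hε
  refine (measure_mono ?_).trans (hausdorffMeasure_strip_le j hε.1.le hε.2)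
  rintro y ⟨hy : y j = 0, hyS⟩
  exact ⟨by simp [hy, hε.1.le], hyS⟩

lemma ae_coord_ne_zero (j : Fin 2) : ∀ᵐ y ∂(μH[1] : Measure Plane).restrict 𝕊, y j ≠ 0 := by
  rw [ae_iff, Measure.restrict_apply' Metric.isClosed_sphere.measurableSet]
  simpa using hausdorffMeasure_axis_inter_sphere j

lemma exists_mem_sphere_coord_eq (j : Fin 2) {s : ℝ} (hs : s ^ 2 ≤ 1) : ∃ y ∈ 𝕊, y j = s := by
  have h := sq_sqrt (sub_nonneg.2 hs)
  fin_cases j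
  · exact ⟨!₂[s, √(1 - s ^ 2)], mem_sphere_iff.2 (by simp [h]), by simp⟩
  · exact ⟨!₂[√(1 - s ^ 2), s], mem_sphere_iff.2 (by simp [h]), by simp⟩

lemma ofReal_le_hausdorffMeasure_strip (j : Fin 2) {ε : ℝ} (hε1 : ε ≤ 1) :
    ENNReal.ofReal ε ≤ μH[1] ({y : Plane | 0 < y j ∧ y j ≤ ε} ∩ 𝕊) := by
  have hsub : Ioc 0 ε ⊆ (fun y : Plane => y j) '' ({y | 0 < y j ∧ y j ≤ ε} ∩ 𝕊) := by
    rintro s ⟨hs0, hsε⟩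
    obtain ⟨y, hy, rfl⟩ := exists_mem_sphere_coord_eq j (s := s) (by nlinarith)
    exact ⟨y, ⟨⟨hs0, hsε⟩, hy⟩, rfl⟩
  calc ENNReal.ofReal ε = μH[1] (Ioc 0 ε) := by simp [hausdorffMeasure_real]
    _ ≤ _ := measure_mono hsub
    _ ≤ _ := by simpa using (lipschitzWith_coord j).hausdorffMeasure_image_le zero_le_one _

lemma integrableOn_log_sq_coord (j : Fin 2) :
    IntegrableOn (fun y : Plane => log (y j ^ 2)) 𝕊 μH[1] := by
  set μ := (μH[1] : Measure Plane).restrict 𝕊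
  have hmeas : Measurable fun y : Plane => -log (y j ^ 2) := by fun_prop
  have hnn : 0 ≤ᵐ[μ] fun y => -log (y j ^ 2) := by
    filter_upwards [ae_restrict_mem Metric.isClosed_sphere.measurableSet] with y hy
    exact neg_nonneg.2 (log_nonpos (sq_nonneg _) (sq_coord_le_one hy j))
  have hlevel (t : ℝ) (ht : t ∈ Ioi 0) :
      μ {y | t < -log (y j ^ 2)} ≤ ENNReal.ofReal (2 * π * exp (-(1 / 2) * t)) := by
    rw [Measure.restrict_apply' Metric.isClosed_sphere.measurableSet]
    refine (measure_mono ?_).trans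
      (hausdorffMeasure_strip_le j (exp_pos _).le (exp_le_one_iff.2 (by linarith [ht.out])))
    rintro y ⟨hy : t < -log (y j ^ 2), hyS⟩
    refine ⟨show |y j| ≤ _ from ?_, hyS⟩
    rcases eq_or_ne (y j) 0 with h | h
    · simp [h, (exp_pos _).le]
    · have hsq : exp (-(1 / 2) * t) ^ 2 = exp (-t) := by rw [sq, ← exp_add]; ring_nf
      rw [← pow_le_pow_iff_left₀ (abs_nonneg _) (exp_pos _).le two_ne_zero, sq_abs, hsq]
      exact ((log_lt_iff_lt_exp (by positivity)).1 (by linarith)).le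
  have hfin : ∫⁻ y, ENNReal.ofReal (-log (y j ^ 2)) ∂μ < ⊤ := by
    rw [lintegral_eq_lintegral_meas_lt μ hnn hmeas.aemeasurable]
    calc _ ≤ ∫⁻ t in Ioi 0, ENNReal.ofReal (2 * π * exp (-(1 / 2) * t)) :=
          setLIntegral_mono' measurableSet_Ioi hlevel
      _ < ⊤ := ((exp_neg_integrableOn_Ioi 0 (by norm_num : (0 : ℝ) < 1 / 2)).const_mul
          (2 * π)).lintegral_lt_top
  have hint : Integrable (fun y => -log (y j ^ 2)) μ :=
    ⟨hmeas.aestronglyMeasurable, (hasFiniteIntegral_iff_ofReal hnn).2 hfin⟩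
  exact (by simpa only [Pi.neg_def, neg_neg] using hint.neg :
    Integrable (fun y : Plane => log (y j ^ 2)) μ)

lemma neg_le_log_sub_log {b u t : ℝ} (hb : 0 ≤ b) (hb1 : b ≤ 1) (hu : 0 ≤ u) (ht : 0 < t) :
    -b ≤ log (b * u + (2 - b) * t) - log (2 * t) := by
  have hq : 0 < b * u + (2 - b) * t := by nlinarith
  rw [← log_div hq.ne' (by positivity)]
  refine le_trans ?_ (one_sub_inv_le_log_of_pos (by positivity))
  have : 2 * t / (b * u + (2 - b) * t) ≤ 1 + b := by
    rw [div_le_iff₀ hq]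
    nlinarith [mul_nonneg (mul_nonneg hb hu) (by linarith : (0 : ℝ) ≤ 1 + b),
      mul_nonneg (mul_nonneg hb (by linarith : 0 ≤ 1 - b)) ht.le]
  rw [inv_div]
  linarith

lemma one_le_log_sub_log {b u t : ℝ} (hb1 : b ≤ 1) (hut : u + t = 1) (ht : 0 < t)
    (h : 2 * exp 1 * t ≤ b) : 1 ≤ log (b * u + (2 - b) * t) - log (2 * t) := by
  have hb : 0 < b := lt_of_lt_of_le (by positivity) h
  have hq : 2 * exp 1 * t ≤ b * u + (2 - b) * t := by
    obtain rfl : u = 1 - t := by linarith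
    nlinarith
  have hq0 : 0 < b * u + (2 - b) * t := lt_of_lt_of_le (by positivity) hq
  rw [← log_div hq0.ne' (by positivity), le_log_iff_exp_le (by positivity),
    le_div_iff₀ (by positivity)]
  linarith

lemma indicator_sub_le_mul_log_sub_log {r s b ε C₀ M w : ℝ} (hrs : r ^ 2 + s ^ 2 = 1)
    (hs : s ≠ 0) (hεb : 2 * exp 1 * ε ^ 2 ≤ b) (hb1 : b ≤ 1) (hC₀ : 0 < C₀) (hw : C₀ ≤ w)
    (hwM : w ≤ M) :
    (Ioc 0 ε).indicator (fun _ => C₀) s - M * b ≤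
      w * (log (b * r ^ 2 + (2 - b) * s ^ 2) - log (2 * s ^ 2)) := by
  have hb : 0 ≤ b := (by positivity : 0 ≤ 2 * exp 1 * ε ^ 2).trans hεb
  have hw₀ : 0 ≤ w := hC₀.le.trans hw
  have hL := neg_le_log_sub_log hb hb1 (sq_nonneg r) (by positivity : 0 < s ^ 2)
  by_cases hsε : s ∈ Ioc 0 ε
  · have hL1 := one_le_log_sub_log hb1 hrs (by positivity) (hεb.trans'
      (mul_le_mul_of_nonneg_left (pow_le_pow_left₀ hsε.1.le hsε.2 2) (by positivity)))
    rw [indicator_of_mem hsε]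
    nlinarith [mul_nonneg hw₀ (sub_nonneg.2 hL1), mul_nonneg hb (hw₀.trans hwM)]
  · rw [indicator_of_notMem hsε]
    nlinarith [mul_nonneg hw₀ (neg_le_iff_add_nonneg.1 hL), mul_nonneg hb (sub_nonneg.2 hwM)]

lemma integrableOn_log_two_mul_sq_coord (j : Fin 2) :
    IntegrableOn (fun y : Plane => log (2 * y j ^ 2)) 𝕊 μH[1] := by
  refine ((integrable_const (log 2)).add (integrableOn_log_sq_coord j)).congr ?_
  filter_upwards [ae_coord_ne_zero j] with y hy
  exact (log_mul two_ne_zero (pow_ne_zero 2 hy)).symm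

lemma integral_mul_log_gain {w : Plane → ℝ} {C₀ M b ε : ℝ} (hC₀ : 0 < C₀)
    (hw : AEStronglyMeasurable w ((μH[1] : Measure Plane).restrict 𝕊))
    (hwC₀ : ∀ y ∈ 𝕊, C₀ ≤ w y) (hwM : ∀ y ∈ 𝕊, w y ≤ M) {i j : Fin 2} (hij : i ≠ j)
    (hε : 0 < ε) (hεb : 2 * exp 1 * ε ^ 2 ≤ b) (hb1 : b ≤ 1) :
    ∫ y in 𝕊, w y * log (2 * y j ^ 2) ∂μH[1] + (C₀ * ε - M * b * (μH[1] : Measure Plane).real 𝕊)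
      ≤ ∫ y in 𝕊, w y * log (b * y i ^ 2 + (2 - b) * y j ^ 2) ∂μH[1] := by
  set μ := (μH[1] : Measure Plane).restrict 𝕊
  set B := (fun y : Plane => y j) ⁻¹' Ioc 0 ε
  have hS : MeasurableSet 𝕊 := Metric.isClosed_sphere.measurableSet
  have hB : MeasurableSet B := (by fun_prop : Measurable fun y : Plane => y j) measurableSet_Ioc
  have hb : 0 < b := lt_of_lt_of_le (by positivity) hεb
  have hε1 : ε ≤ 1 := by nlinarith [add_one_le_exp 1]
  have hcoords {y : Plane} (hy : y ∈ 𝕊) : y i ^ 2 + y j ^ 2 = 1 := by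
    have := mem_sphere_iff.1 hy
    fin_cases i <;> fin_cases j <;> simp_all [add_comm]
  have hwM' : ∀ᵐ y ∂μ, ‖w y‖ ≤ M := by
    filter_upwards [ae_restrict_mem hS] with y hy
    rw [norm_of_nonneg (hC₀.le.trans (hwC₀ y hy))]
    exact hwM y hy
  have hf : Integrable (fun y => w y * log (b * y i ^ 2 + (2 - b) * y j ^ 2)) μ := by
    refine (Integrable.of_bound (by fun_prop : Measurable fun y : Plane =>
      log (b * y i ^ 2 + (2 - b) * y j ^ 2)).aestronglyMeasurable (max |log b| |log 2|) ?_
      ).bdd_mul hw hwM'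
    filter_upwards [ae_restrict_mem hS] with y hy
    have hq : b ≤ b * y i ^ 2 + (2 - b) * y j ^ 2 := by nlinarith [hcoords hy, sq_nonneg (y j)]
    exact abs_le_max_abs_abs (log_le_log hb hq)
      (log_le_log (hb.trans_le hq) (by nlinarith [hcoords hy, sq_nonneg (y i)]))
  have hg := (integrableOn_log_two_mul_sq_coord j).bdd_mul hw hwM'
  have hpt : ∀ᵐ y ∂μ, B.indicator (fun _ => C₀) y - M * b ≤
      w y * log (b * y i ^ 2 + (2 - b) * y j ^ 2) - w y * log (2 * y j ^ 2) := by
    filter_upwards [ae_restrict_mem hS, ae_coord_ne_zero j] with y hy hyj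
    rw [← mul_sub]
    exact indicator_sub_le_mul_log_sub_log (hcoords hy) hyj hεb hb1 hC₀ (hwC₀ y hy) (hwM y hy)
  have hBε : ε ≤ μ.real B := by
    have h : ENNReal.ofReal ε ≤ μH[1] (B ∩ 𝕊) := ofReal_le_hausdorffMeasure_strip j hε1
    rw [← Measure.restrict_apply hB] at h
    exact (ENNReal.ofReal_le_iff_le_toReal (measure_ne_top μ B)).1 h
  have hmono : ∫ y, (B.indicator (fun _ => C₀) y - M * b) ∂μ ≤
      ∫ y, (w y * log (b * y i ^ 2 + (2 - b) * y j ^ 2) - w y * log (2 * y j ^ 2)) ∂μ :=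
    integral_mono_ae (((integrable_const C₀).indicator hB).sub (integrable_const _))
      (hf.sub hg) hpt
  rw [integral_sub ((integrable_const C₀).indicator hB) (integrable_const _),
    integral_indicator_const _ hB, integral_const, integral_sub hf hg, smul_eq_mul, smul_eq_mul,
    measureReal_restrict_apply_univ] at hmono
  nlinarith [mul_le_mul_of_nonneg_left hBε hC₀.le]

lemma exists_forall_integral_mul_log_lt {C₀ : ℝ} (M : ℝ) (hC₀ : 0 < C₀) :
    ∃ b ∈ Ioo (0 : ℝ) 2, ∀ w : Plane → ℝ,
      AEStronglyMeasurable w ((μH[1] : Measure Plane).restrict 𝕊) →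
      (∀ y ∈ 𝕊, C₀ ≤ w y) → (∀ y ∈ 𝕊, w y ≤ M) → ∀ i j : Fin 2, i ≠ j →
      ∫ y in 𝕊, w y * log (2 * y j ^ 2) ∂μH[1] <
        ∫ y in 𝕊, w y * log (b * y i ^ 2 + (2 - b) * y j ^ 2) ∂μH[1] := by
  set m := (μH[1] : Measure Plane).real 𝕊
  have h₁ : ∀ᶠ ε in 𝓝 (0 : ℝ), 2 * exp 1 * ε ^ 2 < 1 :=
    ((by fun_prop : Continuous fun ε : ℝ => 2 * exp 1 * ε ^ 2).tendsto' 0 0 (by simp)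
      ).eventually_lt_const one_pos
  have h₂ : ∀ᶠ ε in 𝓝 (0 : ℝ), M * (2 * exp 1 * ε) * m < C₀ :=
    ((by fun_prop : Continuous fun ε : ℝ => M * (2 * exp 1 * ε) * m).tendsto' 0 0 (by simp)
      ).eventually_lt_const hC₀
  obtain ⟨ε, ⟨hε₁, hε₂⟩, hε⟩ :=
    (((h₁.and h₂).filter_mono nhdsWithin_le_nhds).and (self_mem_nhdsWithin (s := Ioi 0))).exists
  refine ⟨2 * exp 1 * ε ^ 2, ⟨by positivity, by linarith⟩, fun w hw hwC₀ hwM i j hij => ?_⟩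
  have hgain := integral_mul_log_gain hC₀ hw hwC₀ hwM hij hε le_rfl hε₁.le
  nlinarith [mul_lt_mul_of_pos_right hε₂ hε]

noncomputable def logIntegral (Ψ : Plane → ℝ) (β θ : ℝ) : ℝ :=
  ∫ y in 𝕊, Ψ (rot θ y) * log (β * y 0 ^ 2 + (2 - β) * y 1 ^ 2) ∂μH[1]

lemma exists_forall_logIntegral_lt {Ψ : Plane → ℝ} {C₀ : ℝ} (hC₀ : 0 < C₀)
    (hΨ : ContinuousOn Ψ 𝕊) (hΨC₀ : ∀ y ∈ 𝕊, C₀ ≤ Ψ y) :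
    ∃ b ∈ Ioo (0 : ℝ) 2, ∀ θ, logIntegral Ψ 0 θ < logIntegral Ψ b θ ∧
      logIntegral Ψ 2 θ < logIntegral Ψ (2 - b) θ := by
  obtain ⟨M, hM⟩ := (isCompact_sphere (0 : Plane) 1).exists_bound_of_continuousOn hΨ
  obtain ⟨b, hb, hlt⟩ := exists_forall_integral_mul_log_lt M hC₀
  refine ⟨b, hb, fun θ => ?_⟩
  have hw : AEStronglyMeasurable (fun y => Ψ (rot θ y)) ((μH[1] : Measure Plane).restrict 𝕊) :=
    (hΨ.comp (continuous_rot.comp (Continuous.prodMk_right θ)).continuousOn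
      fun y hy => rot_mem_sphere θ hy).aestronglyMeasurable Metric.isClosed_sphere.measurableSet
  have hwC₀ (y : Plane) (hy : y ∈ 𝕊) : C₀ ≤ Ψ (rot θ y) := hΨC₀ _ (rot_mem_sphere θ hy)
  have hwM (y : Plane) (hy : y ∈ 𝕊) : Ψ (rot θ y) ≤ M :=
    (le_abs_self _).trans (hM _ (rot_mem_sphere θ hy))
  have hswap (y : Plane) :
      (2 - b) * y 0 ^ 2 + (2 - (2 - b)) * y 1 ^ 2 = b * y 1 ^ 2 + (2 - b) * y 0 ^ 2 := by ring
  constructor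
  · simpa only [logIntegral, zero_mul, zero_add, sub_zero] using hlt _ hw hwC₀ hwM 0 1 (by decide)
  · simpa only [logIntegral, sub_self, zero_mul, add_zero, hswap] using
      hlt _ hw hwC₀ hwM 1 0 (by decide)

lemma mul_le_quadratic {β u t : ℝ} (hβ : β ∈ Icc (0 : ℝ) 2) (hu : 0 ≤ u) (ht : 0 ≤ t)
    (hu1 : u ≤ 1) (ht1 : t ≤ 1) : u * t ≤ β * u + (2 - β) * t := by
  obtain ⟨h0, h2⟩ := hβ
  nlinarith [mul_nonneg (mul_nonneg h0 hu) (sub_nonneg.2 ht1),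
    mul_nonneg (mul_nonneg (sub_nonneg.2 h2) ht) (sub_nonneg.2 hu1), mul_nonneg hu ht]

lemma abs_log_quadratic_le {β u t : ℝ} (hβ : β ∈ Icc (0 : ℝ) 2) (hu : 0 < u) (ht : 0 < t)
    (hu1 : u ≤ 1) (ht1 : t ≤ 1) :
    |log (β * u + (2 - β) * t)| ≤ log 2 + |log u| + |log t| := by
  have hq := mul_le_quadratic hβ hu.le ht.le hu1 ht1
  have hq2 : β * u + (2 - β) * t ≤ 2 := by nlinarith [hβ.1, hβ.2]
  have hlo : log u + log t ≤ log (β * u + (2 - β) * t) := by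
    rw [← log_mul hu.ne' ht.ne']
    exact log_le_log (by positivity) hq
  have hhi := log_le_log ((mul_pos hu ht).trans_le hq) hq2
  rw [abs_le]
  constructor <;> linarith [neg_abs_le (log u), neg_abs_le (log t), log_nonneg one_le_two,
    abs_nonneg (log u), abs_nonneg (log t)]

lemma continuousOn_logIntegral {Ψ : Plane → ℝ} (hΨ : ContinuousOn Ψ 𝕊) :
    ContinuousOn (fun p : ℝ × ℝ => logIntegral Ψ p.1 p.2) (Icc 0 2 ×ˢ univ) := by
  obtain ⟨M, hM⟩ := (isCompact_sphere (0 : Plane) 1).exists_bound_of_continuousOn hΨ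
  have hS : MeasurableSet 𝕊 := Metric.isClosed_sphere.measurableSet
  refine continuousOn_of_dominated
    (bound := fun y => M * (log 2 + |log (y 0 ^ 2)| + |log (y 1 ^ 2)|)) ?_ ?_ ?_ ?_
  · rintro p -
    exact ((hΨ.comp (continuous_rot.comp (Continuous.prodMk_right p.2)).continuousOn
      fun y hy => rot_mem_sphere p.2 hy).aestronglyMeasurable hS).mul
      (by fun_prop : Measurable fun y : Plane =>
        log (p.1 * y 0 ^ 2 + (2 - p.1) * y 1 ^ 2)).aestronglyMeasurable
  · rintro p ⟨hβ, -⟩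
    filter_upwards [ae_restrict_mem hS, ae_coord_ne_zero 0, ae_coord_ne_zero 1] with y hy h0 h1
    have hΨM := hM _ (rot_mem_sphere p.2 hy)
    rw [norm_mul]
    exact mul_le_mul hΨM (abs_log_quadratic_le hβ (by positivity) (by positivity)
      (sq_coord_le_one hy 0) (sq_coord_le_one hy 1)) (norm_nonneg _) ((norm_nonneg _).trans hΨM)
  · exact (((integrable_const _).add (integrableOn_log_sq_coord 0).abs).add
      (integrableOn_log_sq_coord 1).abs).const_mul M
  · filter_upwards [ae_restrict_mem hS, ae_coord_ne_zero 0, ae_coord_ne_zero 1] with y hy h0 h1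
    refine ContinuousOn.mul ?_ (ContinuousOn.log (by fun_prop) fun p hp => ?_)
    · exact (hΨ.comp_continuous (continuous_rot.comp (continuous_snd.prodMk continuous_const))
        fun p => rot_mem_sphere p.2 hy).continuousOn
    · exact ((by positivity : 0 < y 0 ^ 2 * y 1 ^ 2).trans_le (mul_le_quadratic hp.1
        (sq_nonneg _) (sq_nonneg _) (sq_coord_le_one hy 0) (sq_coord_le_one hy 1))).ne'

lemma exists_isMinOn_prod_univ_of_periodic {f : ℝ × ℝ → ℝ} {s : Set ℝ} (hs : IsCompact s)
    (hne : s.Nonempty) {T : ℝ} (hT : 0 < T) (hf : ContinuousOn f (s ×ˢ univ))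
    (hper : ∀ x y, f (x, y + T) = f (x, y)) : ∃ p ∈ s ×ˢ univ, IsMinOn f (s ×ˢ univ) p := by
  obtain ⟨p, hp, hmin⟩ := (hs.prod isCompact_Icc).exists_isMinOn (hne.prod (nonempty_Icc.2 hT.le))
    (hf.mono (prod_mono subset_rfl (subset_univ _)))
  refine ⟨p, ⟨hp.1, trivial⟩, fun q hq => ?_⟩
  obtain ⟨y, hy, hqy⟩ := Function.Periodic.exists_mem_Ico₀ (f := fun y => f (q.1, y))
    (hper q.1) hT q.2
  have : f p ≤ f (q.1, y) := hmin ⟨hq.1, Ico_subset_Icc_self hy⟩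
  exact this.trans_eq hqy.symm

end ReducedEnergy

open ReducedEnergy

theorem reduced_energy_min_interior_general
    (Ψ : Plane → ℝ) (C₀ : ℝ) (hC₀ : 0 < C₀)
    (hΨcont : ContinuousOn Ψ (Metric.sphere (0 : Plane) 1))
    (hΨlb : ∀ y ∈ Metric.sphere (0 : Plane) 1, C₀ ≤ Ψ y)
    (γ : ℝ → ℝ → ℝ)
    (hγ : ∀ β θ, γ β θ = -(1 / π) * ∫ y in Metric.sphere (0 : Plane) 1,
        Ψ (rot θ y) * Real.log (β * (y 0) ^ 2 + (2 - β) * (y 1) ^ 2) ∂(μH[1])) :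
    ContinuousOn (fun p : ℝ × ℝ => γ p.1 p.2) (Set.Icc (0 : ℝ) 2 ×ˢ Set.univ) ∧
    ∃ β₀ θ₀ : ℝ, β₀ ∈ Set.Ioo (0 : ℝ) 2 ∧
      ∀ β ∈ Set.Icc (0 : ℝ) 2, ∀ θ : ℝ, γ β₀ θ₀ ≤ γ β θ := by
  have hγ' (β θ : ℝ) : γ β θ = -(1 / π) * logIntegral Ψ β θ := hγ β θ
  have hcont : ContinuousOn (fun p : ℝ × ℝ => γ p.1 p.2) (Icc 0 2 ×ˢ univ) := by
    simp only [hγ']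
    exact continuousOn_const.mul (continuousOn_logIntegral hΨcont)
  obtain ⟨p, hp, hmin⟩ := exists_isMinOn_prod_univ_of_periodic isCompact_Icc
    (nonempty_Icc.2 zero_le_two) two_pi_pos hcont
    fun β θ => by simp only [hγ', logIntegral, rot_add_two_pi]
  obtain ⟨b, hb, hlt⟩ := exists_forall_logIntegral_lt hC₀ hΨcont hΨlb
  have hneg : -(1 / π) < 0 := by simp [pi_pos]
  have hmin' (β : ℝ) (hβ : β ∈ Icc (0 : ℝ) 2) (θ : ℝ) : γ p.1 p.2 ≤ γ β θ :=
    isMinOn_iff.1 hmin (β, θ) ⟨hβ, trivial⟩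
  refine ⟨hcont, p.1, p.2, ⟨hp.1.1.lt_of_ne ?_, hp.1.2.lt_of_ne ?_⟩, hmin'⟩
  · rintro h0
    have := hmin' b (Ioo_subset_Icc_self hb) p.2
    rw [← h0, hγ', hγ'] at this
    exact (mul_lt_mul_of_neg_left (hlt p.2).1 hneg).not_ge this
  · rintro h2
    have h2b : 2 - b ∈ Icc (0 : ℝ) 2 := ⟨by linarith [hb.2], by linarith [hb.1]⟩
    have := hmin' (2 - b) h2b p.2
    rw [h2, hγ', hγ'] at this
    exact (mul_lt_mul_of_neg_left (hlt p.2).2 hneg).not_ge this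

/-- The reduced energy `γ(β,Q) = -(1/π) ∫_{S¹} Ψ̂(Qy) log(β y₁² + (2-β) y₂²) dH¹(y)` over
`[0,2] × SO(2)` is continuous, attains its minimum at some `(β₀,Q₀)`, and `β₀ ∈ (0,2)`. -/
theorem reduced_energy_min_interior
    (Ψ : Plane → ℝ) (C₀ : ℝ) (hC₀ : 0 < C₀)
    (hΨcont : ContinuousOn Ψ (Metric.sphere (0 : Plane) 1))
    (hΨlb : ∀ y ∈ Metric.sphere (0 : Plane) 1, C₀ ≤ Ψ y)
    (hΨavg : (1 / (2 * π)) * ∫ y in Metric.sphere (0 : Plane) 1, Ψ y ∂(μH[1]) = 1)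
    (γ : ℝ → ℝ → ℝ)
    (hγ : ∀ β θ, γ β θ = -(1 / π) * ∫ y in Metric.sphere (0 : Plane) 1,
        Ψ (rot θ y) * Real.log (β * (y 0) ^ 2 + (2 - β) * (y 1) ^ 2) ∂(μH[1])) :
    ContinuousOn (fun p : ℝ × ℝ => γ p.1 p.2) (Set.Icc (0 : ℝ) 2 ×ˢ Set.univ) ∧
    ∃ β₀ θ₀ : ℝ, β₀ ∈ Set.Ioo (0 : ℝ) 2 ∧
      ∀ β ∈ Set.Icc (0 : ℝ) 2, ∀ θ : ℝ, γ β₀ θ₀ ≤ γ β θ :=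
  reduced_energy_min_interior_general Ψ C₀ hC₀ hΨcont hΨlb γ hγ
end

section
/- Let Ψ̂: S¹ → [0,∞) and for a₁, a₂ > 0, R ∈ SO(2) define, for x ∈ ℝ², the vector field G(x) = −(1/π) ∫_{S¹} Ψ̂(y) (x·y) y / |D(a)Rᵀy|² dH¹(y). Suppose G(x⁰) · x⁰ + |x⁰|² = 0 for all x⁰ in the ellipse E = R·{x : x₁²/a₁² + x₂²/a₂² ≤ 1}, i.e. (1/π) ∫_{S¹} Ψ̂(y) α(x⁰,y)² dH¹(y) = |x⁰|² with α(x,y) = x·y/|D(a)Rᵀy|. Then for any x = t x⁰ with t > 1 and x⁰ ∈ ∂E, the quantity |x|² − (1/π) ∫_{S¹} Ψ̂(y) [α²χ_{|α|≤1} + (|α|/(|α| + √(α²−1)))χ_{|α|>1}](x,y) dH¹(y) equals (1/π) ∫_{S¹} Ψ̂(y) |α(x,y)| √(α(x,y)²−1) χ_{|α(x,y)|>1} dH¹(y), and in particular is nonnegative. -/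
open Real MeasureTheory

/-!
The Euler–Lagrange equation at `x₀` reads `‖x₀‖² = (1/π) ∫ Ψ̂ α(x₀,·)²`, and since `α` is linear
in `x`, multiplying by `t²` gives it at `x = t x₀`. Splitting `α² = clippedSq α + sqExcess α`
pointwise, which for `|α| > 1` is the identity `α² − |α| / (|α| + √(α² − 1)) = |α| √(α² − 1)`,
turns this into the claimed formula, and its right-hand side has a nonnegative integrand.
-/

theorem MeasureTheory.Integrable.mul_of_abs_le {X : Type*} [MeasurableSpace X] {μ : Measure X}
    {f u v : X → ℝ} (hfu : Integrable (fun x => f x * u x) μ) (hu : AEStronglyMeasurable u μ)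
    (hv : AEStronglyMeasurable v μ) (hvu : ∀ x, |v x| ≤ |u x|) :
    Integrable (fun x => f x * v x) μ := by
  -- No measurability of `f` is needed: `f v = (f u) (v / u)` with `|v / u| ≤ 1`.
  have hfactor : (fun x => f x * v x) = fun x => f x * u x * (v x / u x) := by
    funext x
    by_cases hux : u x = 0
    · have hvx : |v x| ≤ 0 := by simpa [hux] using hvu x
      simp [abs_nonpos_iff.mp hvx]
    · field_simp
  rw [hfactor]
  refine hfu.mul_bdd (hv.div₀ hu) (c := 1) (ae_of_all _ fun x => ?_)
  rw [norm_div, Real.norm_eq_abs, Real.norm_eq_abs]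
  exact div_le_one_of_le₀ (hvu x) (abs_nonneg _)

noncomputable def clippedSq (a : ℝ) : ℝ :=
  if |a| ≤ 1 then a ^ 2 else |a| / (|a| + √(a ^ 2 - 1))

noncomputable def sqExcess (a : ℝ) : ℝ :=
  if 1 < |a| then |a| * √(a ^ 2 - 1) else 0

theorem clippedSq_add_sqExcess (a : ℝ) : clippedSq a + sqExcess a = a ^ 2 := by
  unfold clippedSq sqExcess
  rcases le_or_gt |a| 1 with h | h
  · simp [h, not_lt.2 h]
  · rw [if_neg (not_le.2 h), if_pos h]
    have hsq : √(a ^ 2 - 1) ^ 2 = a ^ 2 - 1 := sq_sqrt (by nlinarith [sq_abs a])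
    have hden : 0 < |a| + √(a ^ 2 - 1) := by positivity
    field_simp
    nlinarith [sq_abs a]

theorem clippedSq_nonneg (a : ℝ) : 0 ≤ clippedSq a := by
  unfold clippedSq
  split_ifs <;> positivity

theorem sqExcess_nonneg (a : ℝ) : 0 ≤ sqExcess a := by
  unfold sqExcess
  split_ifs <;> positivity

theorem clippedSq_le_sq (a : ℝ) : clippedSq a ≤ a ^ 2 := by
  linarith [clippedSq_add_sqExcess a, sqExcess_nonneg a]

theorem measurable_clippedSq : Measurable clippedSq :=
  Measurable.ite (measurableSet_le measurable_abs measurable_const) (measurable_id.pow_const 2)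
    (measurable_abs.div (measurable_abs.add ((measurable_id.pow_const 2).sub_const 1).sqrt))

theorem integral_mul_clippedSq_add_integral_mul_sqExcess {X : Type*} [MeasurableSpace X]
    {μ : Measure X} {f a : X → ℝ} (hfa : Integrable (fun x => f x * a x ^ 2) μ)
    (ha : AEMeasurable a μ) :
    ∫ x, f x * clippedSq (a x) ∂μ + ∫ x, f x * sqExcess (a x) ∂μ = ∫ x, f x * a x ^ 2 ∂μ := by
  have hclipped : Integrable (fun x => f x * clippedSq (a x)) μ :=
    hfa.mul_of_abs_le (ha.pow_const 2).aestronglyMeasurable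
      (measurable_clippedSq.comp_aemeasurable ha).aestronglyMeasurable fun x => by
        rw [abs_of_nonneg (clippedSq_nonneg _), abs_of_nonneg (sq_nonneg _)]
        exact clippedSq_le_sq _
  have hexcess :
      (fun x => f x * sqExcess (a x)) = fun x => f x * a x ^ 2 - f x * clippedSq (a x) := by
    funext x
    rw [← clippedSq_add_sqExcess (a x)]
    ring
  rw [hexcess, integral_sub hfa hclipped]
  ring

theorem radial_monotonicity_outside_ellipse_general
    (a₁ a₂ θ : ℝ)
    (Ψ : Plane → ℝ) (hΨ : ∀ y ∈ Metric.sphere (0 : Plane) 1, 0 ≤ Ψ y)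
    (nrm : Plane → ℝ)
    (hnrm : ∀ y : Plane, nrm y = Real.sqrt
      ((a₁ * (Real.cos θ * y 0 + Real.sin θ * y 1)) ^ 2 +
        (a₂ * (-Real.sin θ * y 0 + Real.cos θ * y 1)) ^ 2))
    (alpha : Plane → Plane → ℝ)
    (halpha : ∀ x y : Plane, alpha x y = (inner ℝ x y : ℝ) / nrm y)
    -- the first Euler–Lagrange equation, on the whole (rotated) ellipse
    (hEL : ∀ x₀ : Plane,
      ((Real.cos θ * x₀ 0 + Real.sin θ * x₀ 1) / a₁) ^ 2 +
        ((-Real.sin θ * x₀ 0 + Real.cos θ * x₀ 1) / a₂) ^ 2 ≤ 1 →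
      (1 / π) * ∫ y in Metric.sphere (0 : Plane) 1, Ψ y * (alpha x₀ y) ^ 2 ∂(μH[1]) =
        ‖x₀‖ ^ 2) :
    ∀ x₀ : Plane,
      ((Real.cos θ * x₀ 0 + Real.sin θ * x₀ 1) / a₁) ^ 2 +
        ((-Real.sin θ * x₀ 0 + Real.cos θ * x₀ 1) / a₂) ^ 2 = 1 →
      ∀ t : ℝ, 1 < t →
        (‖t • x₀‖ ^ 2 - (1 / π) * ∫ y in Metric.sphere (0 : Plane) 1,
            Ψ y * (if |alpha (t • x₀) y| ≤ 1 then (alpha (t • x₀) y) ^ 2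
              else |alpha (t • x₀) y| /
                (|alpha (t • x₀) y| + Real.sqrt ((alpha (t • x₀) y) ^ 2 - 1))) ∂(μH[1]) =
          (1 / π) * ∫ y in Metric.sphere (0 : Plane) 1,
            Ψ y * (if 1 < |alpha (t • x₀) y| then
              |alpha (t • x₀) y| * Real.sqrt ((alpha (t • x₀) y) ^ 2 - 1) else 0) ∂(μH[1])) ∧
        0 ≤ ‖t • x₀‖ ^ 2 - (1 / π) * ∫ y in Metric.sphere (0 : Plane) 1,
            Ψ y * (if |alpha (t • x₀) y| ≤ 1 then (alpha (t • x₀) y) ^ 2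
              else |alpha (t • x₀) y| /
                (|alpha (t • x₀) y| + Real.sqrt ((alpha (t • x₀) y) ^ 2 - 1))) ∂(μH[1]) := by
  intro x₀ hb t ht
  have hx : t • x₀ ≠ 0 := smul_ne_zero (by linarith) (by rintro rfl; norm_num at hb)
  have hscale : ∀ y, Ψ y * alpha (t • x₀) y ^ 2 = t ^ 2 * (Ψ y * alpha x₀ y ^ 2) := fun y => by
    rw [halpha, halpha, real_inner_smul_left]
    ring
  have hsq : (1 / π) * ∫ y in Metric.sphere (0 : Plane) 1, Ψ y * alpha (t • x₀) y ^ 2 ∂(μH[1]) =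
      ‖t • x₀‖ ^ 2 := by
    rw [norm_smul, mul_pow, Real.norm_eq_abs, sq_abs, ← hEL x₀ hb.le]
    simp_rw [hscale, integral_const_mul]
    ring
  have hint : Integrable (fun y => Ψ y * alpha (t • x₀) y ^ 2)
      ((μH[1] : Measure Plane).restrict (Metric.sphere 0 1)) :=
    Integrable.of_integral_ne_zero fun h => by
      rw [h, mul_zero] at hsq
      exact pow_ne_zero 2 (norm_ne_zero_iff.2 hx) hsq.symm
  have hmeas : Measurable (alpha (t • x₀)) := by
    rw [funext (halpha _), funext hnrm]
    fun_prop
  have key : ‖t • x₀‖ ^ 2 - (1 / π) * ∫ y in Metric.sphere (0 : Plane) 1,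
        Ψ y * clippedSq (alpha (t • x₀) y) ∂(μH[1]) =
      (1 / π) * ∫ y in Metric.sphere (0 : Plane) 1, Ψ y * sqExcess (alpha (t • x₀) y) ∂(μH[1]) := by
    rw [← hsq, ← integral_mul_clippedSq_add_integral_mul_sqExcess hint hmeas.aemeasurable]
    ring
  refine ⟨key, le_of_le_of_eq (mul_nonneg (by positivity) ?_) key.symm⟩
  exact setIntegral_nonneg Metric.isClosed_sphere.measurableSet fun y hy =>
    mul_nonneg (hΨ y hy) (sqExcess_nonneg _)

/-- The first Euler–Lagrange equation on the ellipse implies nonnegativity of the radial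
derivative of potential plus confinement outside the ellipse: with
`α(x,y) = x·y/|D(a)Rᵀy|` (rotation `R` by angle `θ`, `D(a) = diag(a₁,a₂)`), if
`(1/π)∫_{S¹} Ψ̂(y) α(x⁰,y)² dH¹(y) = |x⁰|²` for all `x⁰` in the ellipse, then for
`x = t x⁰`, `t > 1`, `x⁰ ∈ ∂E`, the quantity
`|x|² − (1/π)∫ Ψ̂(y)[α²χ_{|α|≤1} + (|α|/(|α|+√(α²−1)))χ_{|α|>1}] dH¹`
equals `(1/π)∫ Ψ̂(y)|α|√(α²−1) χ_{|α|>1} dH¹ ≥ 0`. -/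
theorem radial_monotonicity_outside_ellipse
    (a₁ a₂ θ : ℝ) (ha₁ : 0 < a₁) (ha₂ : 0 < a₂)
    (Ψ : Plane → ℝ) (hΨ : ∀ y ∈ Metric.sphere (0 : Plane) 1, 0 ≤ Ψ y)
    (nrm : Plane → ℝ)
    (hnrm : ∀ y : Plane, nrm y = Real.sqrt
      ((a₁ * (Real.cos θ * y 0 + Real.sin θ * y 1)) ^ 2 +
        (a₂ * (-Real.sin θ * y 0 + Real.cos θ * y 1)) ^ 2))
    (alpha : Plane → Plane → ℝ)
    (halpha : ∀ x y : Plane, alpha x y = (inner ℝ x y : ℝ) / nrm y)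
    -- the first Euler–Lagrange equation, on the whole (rotated) ellipse
    (hEL : ∀ x₀ : Plane,
      ((Real.cos θ * x₀ 0 + Real.sin θ * x₀ 1) / a₁) ^ 2 +
        ((-Real.sin θ * x₀ 0 + Real.cos θ * x₀ 1) / a₂) ^ 2 ≤ 1 →
      (1 / π) * ∫ y in Metric.sphere (0 : Plane) 1, Ψ y * (alpha x₀ y) ^ 2 ∂(μH[1]) =
        ‖x₀‖ ^ 2) :
    ∀ x₀ : Plane,
      ((Real.cos θ * x₀ 0 + Real.sin θ * x₀ 1) / a₁) ^ 2 +
        ((-Real.sin θ * x₀ 0 + Real.cos θ * x₀ 1) / a₂) ^ 2 = 1 →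
      ∀ t : ℝ, 1 < t →
        (‖t • x₀‖ ^ 2 - (1 / π) * ∫ y in Metric.sphere (0 : Plane) 1,
            Ψ y * (if |alpha (t • x₀) y| ≤ 1 then (alpha (t • x₀) y) ^ 2
              else |alpha (t • x₀) y| /
                (|alpha (t • x₀) y| + Real.sqrt ((alpha (t • x₀) y) ^ 2 - 1))) ∂(μH[1]) =
          (1 / π) * ∫ y in Metric.sphere (0 : Plane) 1,
            Ψ y * (if 1 < |alpha (t • x₀) y| then
              |alpha (t • x₀) y| * Real.sqrt ((alpha (t • x₀) y) ^ 2 - 1) else 0) ∂(μH[1])) ∧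
        0 ≤ ‖t • x₀‖ ^ 2 - (1 / π) * ∫ y in Metric.sphere (0 : Plane) 1,
            Ψ y * (if |alpha (t • x₀) y| ≤ 1 then (alpha (t • x₀) y) ^ 2
              else |alpha (t • x₀) y| /
                (|alpha (t • x₀) y| + Real.sqrt ((alpha (t • x₀) y) ^ 2 - 1))) ∂(μH[1]) :=
  radial_monotonicity_outside_ellipse_general a₁ a₂ θ Ψ hΨ nrm hnrm alpha halpha hEL
end
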